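/- arXiv:1507.02436 — 4 statements merged into one kernel-verified Lean document; each statement's English description precedes it below -/
import Mathlib

section
/- (Gowers's Hilbert space regularity lemma.) Let δ > 0 and let η : ℝ₊ → ℝ₊ be any function. Let H be a Hilbert space with norm ‖·‖_H and let ‖·‖ be an arbitrary further extended seminorm on H, with dual extended seminorm ‖·‖*. Then for every f ∈ H with ‖f‖_H ≤ 1 there exists a constant C, bounded in terms of δ and η only, and a decomposition f = σ + u + v such that ‖σ‖ < C, ‖u‖* < η(C), and ‖v‖_H < δ. -/
/-! The sublevel sets `S n = {N < C_n}` are convex and increase with `n`, so the distances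
`Θ n = dist(f, S n)` decrease within `[0, 1]`; by pigeonhole
`Θ n ^ 2 - Θ (n + 1) ^ 2 ≤ 1 / r ≤ δ² / 2` for some `n < r`. Let `p` and `q` be the nearest
points to `f` in the closures of `S n` and `S (n + 1)`. The obtuse-angle criterion at `q` gives
`‖q - p‖² ≤ Θ n ^ 2 - Θ (n + 1) ^ 2 < δ²`, so `q` is within `δ` of some `σ ∈ S n`. Tested against
the vectors `c • φ ∈ S (n + 1)` with `N φ ≤ 1` and `|c| = C_{n+1} / 2`, the same criterion gives
`|⟪f - q, φ⟫| ≤ 1 / (2 C_{n+1}) < η C_n`. Take `u = f - q` and `v = q - σ`. -/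

open scoped ENNReal BigOperators

/-- The sequence `C_r = 1`, `C_{i-1} = max {C_i, 2/η(C_i)}`, reindexed so that
`gowersC η n = C_{r-n}`. -/
noncomputable def gowersC (η : ℝ → ℝ) : ℕ → ℝ
  | 0 => 1
  | n + 1 => max (gowersC η n) (2 / η (gowersC η n))

open scoped InnerProductSpace ComplexConjugate
open RCLike Finset

lemma one_le_gowersC (η : ℝ → ℝ) : ∀ n, 1 ≤ gowersC η n
  | 0 => le_rfl
  | n + 1 => (one_le_gowersC η n).trans (le_max_left _ _)

lemma gowersC_pos (η : ℝ → ℝ) (n : ℕ) : 0 < gowersC η n :=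
  one_pos.trans_le (one_le_gowersC η n)

lemma monotone_gowersC (η : ℝ → ℝ) : Monotone (gowersC η) :=
  monotone_nat_of_le_succ fun _ => le_max_left _ _

lemma one_div_two_mul_gowersC_succ_lt {η : ℝ → ℝ} (hη : ∀ x, 0 < x → 0 < η x) (n : ℕ) :
    1 / (2 * gowersC η (n + 1)) < η (gowersC η n) := by
  have hηC := hη _ (gowersC_pos η n)
  have h2 : 2 ≤ gowersC η (n + 1) * η (gowersC η n) := (div_le_iff₀ hηC).1 (le_max_right _ _)
  rw [div_lt_iff₀ (mul_pos two_pos (gowersC_pos η (n + 1)))]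
  linarith

lemma exists_sub_succ_le_div {a : ℕ → ℝ} {b : ℝ} {r : ℕ} (hr : 0 < r)
    (h : a 0 - a r ≤ b) : ∃ n < r, a n - a (n + 1) ≤ b / r := by
  have hsum : ∑ n ∈ range r, (a n - a (n + 1)) ≤ ∑ _n ∈ range r, b / r := by
    rw [sum_range_sub', sum_const, card_range, nsmul_eq_mul, mul_div_cancel₀ _ (by positivity)]
    exact h
  obtain ⟨n, hn, hle⟩ := exists_le_of_sum_le (nonempty_range_iff.2 hr.ne') hsum
  exact ⟨n, mem_range.1 hn, hle⟩

lemma exists_sq_infDist_sub_succ_le {E : Type*} [SeminormedAddCommGroup E] {s : ℕ → Set E}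
    {f : E} (h0 : (0 : E) ∈ s 0) (hf : ‖f‖ ≤ 1) {r : ℕ} (hr : 0 < r) :
    ∃ n < r, Metric.infDist f (s n) ^ 2 - Metric.infDist f (s (n + 1)) ^ 2 ≤ 1 / r := by
  refine exists_sub_succ_le_div hr ?_
  have h : Metric.infDist f (s 0) ≤ 1 :=
    (Metric.infDist_le_dist_of_mem h0).trans (by rwa [dist_zero_right])
  nlinarith [Metric.infDist_nonneg (x := f) (s := s 0), sq_nonneg (Metric.infDist f (s r))]

lemma apply_smul_of_nonneg {𝕜 E : Type*} [RCLike 𝕜] [AddCommGroup E] [Module ℝ E] [Module 𝕜 E]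
    [IsScalarTower ℝ 𝕜 E] {N : E → ℝ≥0∞} (hN0 : N 0 = 0)
    (hNsmul : ∀ (c : 𝕜) (x : E), c ≠ 0 → N (c • x) = (‖c‖₊ : ℝ≥0∞) * N x)
    {a : ℝ} (ha : 0 ≤ a) (x : E) : N (a • x) = ENNReal.ofReal a * N x := by
  rcases ha.eq_or_lt with rfl | ha
  · simp [hN0]
  · rw [← algebraMap_smul 𝕜, hNsmul _ _ (by simpa using ha.ne'), ← enorm_eq_nnnorm,
      ← ofReal_norm, RCLike.algebraMap_eq_ofReal, RCLike.norm_ofReal, abs_of_pos ha]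

lemma convex_setOf_lt {E : Type*} [AddCommGroup E] [Module ℝ E] {N : E → ℝ≥0∞}
    (hNadd : ∀ x y, N (x + y) ≤ N x + N y)
    (hNsmul : ∀ {a : ℝ}, 0 ≤ a → ∀ x, N (a • x) = ENNReal.ofReal a * N x) (c : ℝ≥0∞) :
    Convex ℝ {x | N x < c} := by
  intro x hx y hy a b ha hb hab
  calc N (a • x + b • y) ≤ ENNReal.ofReal a * N x + ENNReal.ofReal b * N y := by
        rw [← hNsmul ha, ← hNsmul hb]; exact hNadd _ _
    _ ≤ (ENNReal.ofReal a + ENNReal.ofReal b) * max (N x) (N y) := by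
        rw [add_mul]; gcongr; exacts [le_max_left _ _, le_max_right _ _]
    _ < c := by
        rw [← ENNReal.ofReal_add ha hb, hab, ENNReal.ofReal_one, one_mul]
        exact max_lt hx hy

section RealInner

variable {F : Type*} [NormedAddCommGroup F] [InnerProductSpace ℝ F]

lemma exists_mem_closure_norm_sub_eq_infDist [CompleteSpace F] {s : Set F} (hs : Convex ℝ s)
    (hne : s.Nonempty) (f : F) :
    ∃ p ∈ closure s, ‖f - p‖ = Metric.infDist f s ∧
      ∀ w ∈ closure s, ⟪f - p, w - p⟫_ℝ ≤ 0 := by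
  obtain ⟨p, hp, hmin⟩ := exists_norm_eq_iInf_of_complete_convex hne.closure
    isClosed_closure.isComplete hs.closure f
  refine ⟨p, hp, ?_, (norm_eq_iInf_iff_real_inner_le_zero hs.closure hp).1 hmin⟩
  rw [hmin, ← Metric.infDist_closure, Metric.infDist_eq_iInf]
  simp only [dist_eq_norm]

lemma sq_norm_sub_add_sq_norm_sub_le {K : Set F} {f p q : F}
    (hvar : ∀ w ∈ K, ⟪f - q, w - q⟫_ℝ ≤ 0) (hp : p ∈ K) :
    ‖f - q‖ ^ 2 + ‖q - p‖ ^ 2 ≤ ‖f - p‖ ^ 2 := by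
  have hpq : ⟪f - q, p - q⟫_ℝ ≤ 0 := hvar p hp
  rw [← sub_add_sub_cancel f q p, norm_add_sq_real, ← neg_sub p q, inner_neg_right]
  linarith

lemma real_inner_sub_le_one_div_four {K : Set F} {f q w : F} (hf : ‖f‖ ≤ 1)
    (hvar : ∀ w ∈ K, ⟪f - q, w - q⟫_ℝ ≤ 0) (hw : w ∈ K) : ⟪f - q, w⟫_ℝ ≤ 1 / 4 := by
  have hwq : ⟪f - q, w⟫_ℝ ≤ ⟪f - q, q⟫_ℝ := by
    have := hvar w hw
    rw [inner_sub_right] at this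
    linarith
  have hfq : ⟪f, q⟫_ℝ ≤ ‖q‖ := (real_inner_le_norm f q).trans (by nlinarith [norm_nonneg q])
  rw [inner_sub_left f q q, real_inner_self_eq_norm_sq] at hwq
  nlinarith [sq_nonneg (‖q‖ - 1 / 2)]

end RealInner

lemma RCLike.mul_norm_le_of_forall_re_mul_le {𝕜 : Type*} [RCLike 𝕜] {a : 𝕜} {t b : ℝ}
    (ht : 0 ≤ t) (h : ∀ c : 𝕜, ‖c‖ = t → re (c * a) ≤ b) : t * ‖a‖ ≤ b := by
  rcases eq_or_ne a 0 with rfl | ha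
  · simpa using h t (by simp [abs_of_nonneg ht])
  · have hna : 0 < ‖a‖ := norm_pos_iff.2 ha
    convert h ((t / ‖a‖ : ℝ) * conj a) ?_ using 1
    · rw [mul_assoc, conj_mul, ← ofReal_pow, ← ofReal_mul, ofReal_re]
      field_simp
    · rw [norm_mul, norm_conj, norm_ofReal, abs_of_nonneg (by positivity),
        div_mul_cancel₀ _ hna.ne']

lemma iSup_nnnorm_inner_le {𝕜 E : Type*} [RCLike 𝕜] [SeminormedAddCommGroup E]
    [InnerProductSpace 𝕜 E] {N : E → ℝ≥0∞}
    (hNsmul : ∀ (c : 𝕜) (x : E), c ≠ 0 → N (c • x) = (‖c‖₊ : ℝ≥0∞) * N x)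
    (u : E) {t b : ℝ} (ht : 0 < t) (h : ∀ w, N w ≤ ENNReal.ofReal t → re ⟪u, w⟫_𝕜 ≤ b) :
    ⨆ (φ : E) (_ : N φ ≤ 1), (‖⟪u, φ⟫_𝕜‖₊ : ℝ≥0∞) ≤ ENNReal.ofReal (b / t) := by
  refine iSup₂_le fun φ hφ => ?_
  rw [← enorm_eq_nnnorm, ← ofReal_norm]
  refine ENNReal.ofReal_le_ofReal ((le_div_iff₀' ht).2
    (RCLike.mul_norm_le_of_forall_re_mul_le ht.le fun c hc => ?_))
  have hc0 : c ≠ 0 := by rintro rfl; simp [ht.ne] at hc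
  rw [← inner_smul_right]
  refine h _ ?_
  rw [hNsmul c φ hc0, ← enorm_eq_nnnorm, ← ofReal_norm, hc]
  exact (mul_le_mul_right hφ _).trans_eq (mul_one _)

/-- Gowers's Hilbert space regularity lemma: for any `δ > 0`, any `η : ℝ₊ → ℝ₊`, any
extended seminorm `N` on a Hilbert space `H` with dual `N*`, and any `f` with `‖f‖ ≤ 1`,
there is a constant `C`, among the values `gowersC η n` for `n < r` with `r ≥ 2δ⁻²`
(hence depending only on `δ` and `η`), and a decomposition `f = σ + u + v` with
`N σ < C`, `N* u < η C`, `‖v‖ < δ`. -/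
theorem stmt_4 (δ : ℝ) (hδ : 0 < δ) (η : ℝ → ℝ) (hη : ∀ x, 0 < x → 0 < η x)
    {H : Type*} [NormedAddCommGroup H] [InnerProductSpace ℂ H] [CompleteSpace H]
    (N : H → ℝ≥0∞) (hN0 : N 0 = 0)
    (hNadd : ∀ f g : H, N (f + g) ≤ N f + N g)
    (hNsmul : ∀ (c : ℂ) (f : H), c ≠ 0 → N (c • f) = (‖c‖₊ : ℝ≥0∞) * N f)
    (f : H) (hf : ‖f‖ ≤ 1) (r : ℕ) (hr : 2 / δ ^ 2 ≤ (r : ℝ)) :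
    ∃ n < r, ∃ σ u v : H, f = σ + u + v ∧
      N σ < ENNReal.ofReal (gowersC η n) ∧
      (⨆ (φ : H) (_ : N φ ≤ 1), (‖(inner ℂ u φ : ℂ)‖₊ : ℝ≥0∞))
        < ENNReal.ofReal (η (gowersC η n)) ∧
      ‖v‖ < δ := by
  let _ : InnerProductSpace ℝ H := InnerProductSpace.complexToReal
  set C := gowersC η
  set S : ℕ → Set H := fun n => {x | N x < ENNReal.ofReal (C n)}
  have hS0 (n : ℕ) : (0 : H) ∈ S n := by simpa [S, hN0] using gowersC_pos η n
  have hSconv (n : ℕ) : Convex ℝ (S n) :=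
    convex_setOf_lt hNadd (apply_smul_of_nonneg hN0 hNsmul) _
  have hSmono : Monotone S := fun m k hmk x hx =>
    hx.trans_le (ENNReal.ofReal_le_ofReal (monotone_gowersC η hmk))
  have hr0 : 0 < r := by exact_mod_cast (by positivity : (0 : ℝ) < 2 / δ ^ 2).trans_le hr
  have hrδ : 1 / (r : ℝ) ≤ δ ^ 2 / 2 :=
    (one_div_le (by positivity) (by positivity)).2 (by rwa [one_div_div])
  obtain ⟨n, hnr, hgap⟩ := exists_sq_infDist_sub_succ_le (hS0 0) hf hr0
  obtain ⟨p, hp, hfp, -⟩ := exists_mem_closure_norm_sub_eq_infDist (hSconv n) ⟨0, hS0 n⟩ f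
  obtain ⟨q, -, hfq, hvar⟩ :=
    exists_mem_closure_norm_sub_eq_infDist (hSconv (n + 1)) ⟨0, hS0 (n + 1)⟩ f
  have hqp : ‖q - p‖ < δ := by
    have hpyth := sq_norm_sub_add_sq_norm_sub_le hvar (closure_mono (hSmono n.le_succ) hp)
    rw [hfp, hfq] at hpyth
    exact lt_of_pow_lt_pow_left₀ 2 hδ.le (by nlinarith)
  obtain ⟨σ, hσ, hpσ⟩ := Metric.mem_closure_iff.1 hp (δ - ‖q - p‖) (sub_pos.2 hqp)
  refine ⟨n, hnr, σ, f - q, q - σ, by abel, hσ, ?_, ?_⟩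
  · have hC := gowersC_pos η (n + 1)
    calc _ ≤ ENNReal.ofReal (1 / 4 / (C (n + 1) / 2)) :=
          iSup_nnnorm_inner_le hNsmul _ (by positivity) fun w hw =>
            real_inner_sub_le_one_div_four hf hvar <| subset_closure <|
              hw.trans_lt ((ENNReal.ofReal_lt_ofReal_iff hC).2 (by linarith))
      _ = ENNReal.ofReal (1 / (2 * C (n + 1))) := by ring_nf
      _ < ENNReal.ofReal (η (C n)) :=
          (ENNReal.ofReal_lt_ofReal_iff (hη _ (gowersC_pos η n))).2
            (one_div_two_mul_gowersC_succ_lt hη n)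
  · rw [dist_eq_norm] at hpσ
    linarith [norm_sub_le_norm_sub_add_norm_sub q p σ]
end

section
/- Let H be a Hilbert space and let φ₁,…,φ_r ∈ H satisfy ‖φ_i‖_H ≤ δ⁻¹ for all i, |⟨φ_i,φ_j⟩| ≤ 1/2 for all i < j, and ⟨φ_i, f⟩ ≥ 1 for all i, for some f ∈ H with ‖f‖_H ≤ 1. Then r < 2δ⁻². -/
open scoped RealInnerProductSpace BigOperators

/-- Almost-orthogonal vectors correlating with a unit vector: if `‖φᵢ‖ ≤ δ⁻¹`,
`|⟨φᵢ,φⱼ⟩| ≤ 1/2` for `i < j`, and `⟨φᵢ,f⟩ ≥ 1` with `‖f‖ ≤ 1`, then `r < 2δ⁻²`. -/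
theorem stmt_5 {H : Type*} [NormedAddCommGroup H] [InnerProductSpace ℝ H] [CompleteSpace H]
    (δ : ℝ) (hδ : 0 < δ) (r : ℕ) (φ : Fin r → H) (f : H) (hf : ‖f‖ ≤ 1)
    (hφ : ∀ i, ‖φ i‖ ≤ δ⁻¹)
    (horth : ∀ i j : Fin r, i < j → |⟪φ i, φ j⟫| ≤ 1 / 2)
    (hcorr : ∀ i, 1 ≤ ⟪φ i, f⟫) :
    (r : ℝ) < 2 / δ ^ 2 := by
  have hδ2 : (0:ℝ) < δ ^ 2 := by positivity
  rcases Nat.eq_zero_or_pos r with h0 | hrpos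
  · subst h0; simpa using by positivity
  have hr1 : (1:ℝ) ≤ (r:ℝ) := by exact_mod_cast hrpos
  set S := ∑ i, φ i with hS
  have h1 : (r:ℝ) ≤ ⟪S, f⟫ := by
    rw [hS, sum_inner]
    calc (r:ℝ) = ∑ _i : Fin r, (1:ℝ) := by simp
    _ ≤ ∑ i, ⟪φ i, f⟫ := Finset.sum_le_sum fun i _ => hcorr i
  have h2 : ⟪S, f⟫ ≤ ‖S‖ := by
    calc ⟪S, f⟫ ≤ ‖S‖ * ‖f‖ := real_inner_le_norm _ _
    _ ≤ ‖S‖ * 1 := by gcongr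
    _ = ‖S‖ := mul_one _
  have key : ∀ i j : Fin r, ⟪φ i, φ j⟫ ≤ if i = j then δ⁻¹ ^ 2 else 1/2 := by
    intro i j
    by_cases h : i = j
    · subst h
      simp only [if_pos rfl]
      rw [real_inner_self_eq_norm_sq]
      exact pow_le_pow_left₀ (norm_nonneg _) (hφ i) 2
    · simp only [if_neg h]
      rcases lt_or_gt_of_ne h with hlt | hgt
      · exact (abs_le.mp (horth i j hlt)).2
      · rw [real_inner_comm]
        exact (abs_le.mp (horth j i hgt)).2
  have hSS : ⟪S, S⟫ ≤ (r:ℝ) * δ⁻¹ ^ 2 + ((r:ℝ)^2 - r) * (1/2) := by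
    rw [hS, sum_inner]
    simp_rw [inner_sum]
    calc ∑ i, ∑ j, ⟪φ i, φ j⟫
        ≤ ∑ i : Fin r, ∑ j : Fin r, (if i = j then δ⁻¹ ^ 2 else 1/2) := by
          apply Finset.sum_le_sum; intro i _
          exact Finset.sum_le_sum fun j _ => key i j
      _ = (r:ℝ) * δ⁻¹ ^ 2 + ((r:ℝ)^2 - r) * (1/2) := by
          have : ∀ i : Fin r, ∑ j : Fin r, (if i = j then δ⁻¹ ^ 2 else 1/2)
              = δ⁻¹ ^ 2 + ((r:ℝ) - 1) * (1/2) := by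
            intro i
            have : ∀ j : Fin r, (if i = j then δ⁻¹ ^ 2 else 1/2)
                = (if i = j then δ⁻¹ ^ 2 - 1/2 else 0) + 1/2 := by
              intro j; by_cases h : i = j <;> simp [h]
            simp_rw [this]
            rw [Finset.sum_add_distrib, Finset.sum_ite_eq (Finset.univ : Finset (Fin r)) i
              (fun _ => δ⁻¹ ^ 2 - 1/2)]
            simp
            ring
          simp_rw [this]
          simp [Finset.sum_const]
          ring
  have hnorm : (r:ℝ)^2 ≤ ⟪S, S⟫ := by
    rw [real_inner_self_eq_norm_sq]
    have hSnn : (r:ℝ) ≤ ‖S‖ := h1.trans h2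
    nlinarith [norm_nonneg S]
  have hinv : δ⁻¹ ^ 2 = 1 / δ ^ 2 := by field_simp
  rw [hinv] at hSS
  have hfinal : (r:ℝ)^2 ≤ (r:ℝ) * (1 / δ^2) + ((r:ℝ)^2 - r) * (1/2) := hnorm.trans hSS
  rw [lt_div_iff₀ hδ2]
  have h3 := mul_le_mul_of_nonneg_right hfinal hδ2.le
  have h4 : (1 / δ ^ 2) * δ ^ 2 = 1 := by field_simp
  nlinarith [mul_pos (lt_of_lt_of_le one_pos hr1) hδ2, sq_nonneg ((r:ℝ)*δ)]
end

section
/- For every positive integer d, all real numbers N₁,…,N_d, x₁,…,x_d, t, the identity Σ_{j=0}^{d} Σ_{k=max{j,1}}^{d} (−1)^j (1/k!) C(k,j) N_k (Σ_{l=1}^{k} l·x_l − j·t)^k = Σ_{k=1}^{d} N_k t^k holds. -/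
/-!
After exchanging the two sums, the coefficient of `N k / k!` is an alternating binomial sum of
`(S - j t)^k` over `j`, i.e. up to sign the `k`-th forward difference of a polynomial of degree `k`
in `j` with leading coefficient `(-t)^k`; it therefore equals `k! t^k`.
-/

open Finset Nat
open scoped fwdDiff

section

variable {R : Type*} [CommRing R]

theorem fwdDiff_iter_affine_pow (a b : R) (n : ℕ) :
    (Δ_[1])^[n] (fun r : R ↦ (a + b * r) ^ n) = fun _ ↦ (n ! : R) * b ^ n := by
  have expand : (fun r : R ↦ (a + b * r) ^ n) =
      (fun r ↦ ∑ i ∈ range n, (b ^ i * a ^ (n - i) * n.choose i) * r ^ i) +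
        b ^ n • fun r ↦ r ^ n := by
    ext r
    simp only [add_comm a, add_pow, sum_range_succ, Pi.add_apply, Pi.smul_apply, smul_eq_mul,
      Nat.sub_self, pow_zero, Nat.choose_self, Nat.cast_one, mul_one, mul_pow]
    exact congrArg (· + _) (sum_congr rfl fun i _ ↦ by ring)
  ext
  rw [expand, fwdDiff_iter_add, fwdDiff_iter_sum_mul_pow_eq_zero, fwdDiff_iter_const_smul,
    fwdDiff_iter_eq_factorial]
  simp [mul_comm]

theorem alternating_sum_choose_mul_sub_pow (S t : R) (n : ℕ) :
    ∑ j ∈ range (n + 1), (-1) ^ j * (n.choose j : R) * (S - j * t) ^ n = n ! * t ^ n := by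
  have h := congr_fun (fwdDiff_iter_affine_pow S (-t) n) 0
  rw [fwdDiff_iter_eq_sum_shift] at h
  simp only [zero_add, nsmul_eq_mul, mul_one, zsmul_eq_mul, Int.cast_mul, Int.cast_pow,
    Int.cast_neg, Int.cast_one, Int.cast_natCast] at h
  have sign (j : ℕ) (hj : j ≤ n) : ((-1 : R) ^ j) = (-1) ^ n * (-1) ^ (n - j) := by
    obtain ⟨m, rfl⟩ := Nat.exists_eq_add_of_le hj
    rw [Nat.add_sub_cancel_left, pow_add, mul_assoc, ← mul_pow, neg_one_mul, neg_neg, one_pow,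
      mul_one]
  calc ∑ j ∈ range (n + 1), (-1) ^ j * (n.choose j : R) * (S - j * t) ^ n
      = (-1) ^ n * ∑ j ∈ range (n + 1), (-1) ^ (n - j) * (n.choose j : R) * (S + -t * j) ^ n := by
        rw [mul_sum]
        refine sum_congr rfl fun j hj ↦ ?_
        rw [sign j (Nat.lt_succ_iff.mp (mem_range.mp hj))]
        ring
    _ = n ! * t ^ n := by
        rw [h, mul_left_comm, ← mul_pow, neg_one_mul, neg_neg]

end

theorem stmt_8_general (d : ℕ) (N x : ℕ → ℝ) (t : ℝ) :
    ∑ j ∈ Finset.range (d + 1), ∑ k ∈ Finset.Icc (max j 1) d,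
        (-1 : ℝ) ^ j * (1 / (k.factorial : ℝ)) * (k.choose j : ℝ) * N k *
          ((∑ l ∈ Finset.Icc 1 k, (l : ℝ) * x l) - (j : ℝ) * t) ^ k
      = ∑ k ∈ Finset.Icc 1 d, N k * t ^ k := by
  rw [sum_comm' (t' := Icc 1 d) (s' := fun k ↦ range (k + 1)) fun j k ↦ by
    simp only [mem_range, mem_Icc, max_le_iff]
    omega]
  refine sum_congr rfl fun k _ ↦ ?_
  set S := ∑ l ∈ Icc 1 k, (l : ℝ) * x l
  calc ∑ j ∈ range (k + 1), (-1 : ℝ) ^ j * (1 / (k ! : ℝ)) * (k.choose j : ℝ) * N k *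
          (S - j * t) ^ k
      = N k / k ! * ∑ j ∈ range (k + 1), (-1 : ℝ) ^ j * (k.choose j : ℝ) * (S - j * t) ^ k := by
        rw [mul_sum]
        exact sum_congr rfl fun j _ ↦ by ring
    _ = N k * t ^ k := by
        rw [alternating_sum_choose_mul_sub_pow]
        field_simp

/-- The polynomial identity
`∑_{j=0}^{d} ∑_{k=max{j,1}}^{d} (-1)^j (1/k!) C(k,j) N_k (∑_{l=1}^{k} l·x_l − j·t)^k
  = ∑_{k=1}^{d} N_k t^k`. -/
theorem stmt_8 (d : ℕ) (hd : 1 ≤ d) (N x : ℕ → ℝ) (t : ℝ) :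
    ∑ j ∈ Finset.range (d + 1), ∑ k ∈ Finset.Icc (max j 1) d,
        (-1 : ℝ) ^ j * (1 / (k.factorial : ℝ)) * (k.choose j : ℝ) * N k *
          ((∑ l ∈ Finset.Icc 1 k, (l : ℝ) * x l) - (j : ℝ) * t) ^ k
      = ∑ k ∈ Finset.Icc 1 d, N k * t ^ k :=
  stmt_8_general d N x t
end

section
/- Let m ≥ 1 and let ψ : ℝ → ℂ be integrable with ‖ψ‖₁ ≤ A. Define the (m+1)-linear form Λ(F₀,…,F_m) := ∫_{ℝ^{m+1}} Πᵢ₌₀ᵐ Fᵢ(x_{(i)}) ψ(x₀+⋯+x_m) dx, where x_{(i)} ∈ ℝᵐ denotes x with the i-th coordinate omitted. Then for any Hölder tuple 1 ≤ p₀,…,p_m ≤ ∞ with Σᵢ 1/pᵢ = 1, one has |Λ(F₀,…,F_m)| ≤ C_m · A · Πᵢ ‖Fᵢ‖_{pᵢ} for a constant C_m depending only on m. -/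
open MeasureTheory
open scoped ENNReal BigOperators

/-!
Substituting `x = (t - ∑ u, u)` with `t ∈ ℝ`, `u ∈ ℝᵐ` preserves Lebesgue measure and makes the
argument of `ψ` equal to `t`. For fixed `t`, each map `u ↦ x_{(i)}` is again volume preserving on
`ℝᵐ` (up to reordering coordinates it is `s ↦ c - s` in one coordinate, the identity in the
others), so Hölder's inequality for `∏ᵢ Fᵢ(x_{(i)})` with `∑ 1/pᵢ = 1` bounds the inner integral
by `∏ ‖Fᵢ‖_{pᵢ}` uniformly in `t`. Integrating against `|ψ(t)|` gives the estimate with `C = 1`.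
-/

/-- `Λ(F₀,…,F_m) = ∫_{ℝ^{m+1}} ∏ᵢ Fᵢ(x_{(i)}) ψ(x₀+⋯+x_m) dx`. -/
noncomputable def simplexForm (m : ℕ) (ψ : ℝ → ℂ)
    (F : Fin (m + 1) → (Fin m → ℝ) → ℂ) : ℂ :=
  ∫ x : Fin (m + 1) → ℝ,
    (∏ i, F i (fun j => x (Fin.succAbove i j))) * ψ (∑ j, x j)

theorem eLpNorm_prod_le {α ι 𝕜 : Type*} [MeasurableSpace α] {μ : Measure α}
    [NormedCommRing 𝕜] [NormOneClass 𝕜] (s : Finset ι) (p : ι → ℝ≥0∞) {f : ι → α → 𝕜}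
    (hf : ∀ i ∈ s, AEStronglyMeasurable (f i) μ) :
    eLpNorm (fun a => ∏ i ∈ s, f i a) (∑ i ∈ s, (p i)⁻¹)⁻¹ μ ≤ ∏ i ∈ s, eLpNorm (f i) (p i) μ := by
  induction s using Finset.cons_induction with
  | empty =>
    simpa [eLpNorm_exponent_top] using
      eLpNormEssSup_le_of_ae_enorm_bound (μ := μ) (.of_forall fun _ => (enorm_one (G := 𝕜)).le)
  | cons i s hi ih =>
    rw [Finset.forall_mem_cons] at hf
    simp only [Finset.prod_cons, Finset.sum_cons]
    have := ENNReal.HolderTriple.of (p i) (∑ j ∈ s, (p j)⁻¹)⁻¹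
    rw [inv_inv] at this
    calc _ ≤ eLpNorm (f i) (p i) μ * eLpNorm (fun a => ∏ j ∈ s, f j a) (∑ j ∈ s, (p j)⁻¹)⁻¹ μ :=
          eLpNorm_smul_le_mul_eLpNorm (Finset.aestronglyMeasurable_fun_prod s hf.2) hf.1
      _ ≤ _ := by gcongr; exact ih hf.2

theorem measurePreserving_finCons_skew {α : Type*} [MeasureSpace α]
    [SigmaFinite (volume : Measure α)] {n : ℕ} (φ : (Fin n → α) → α → α)
    (hφ : Measurable (Function.uncurry φ)) (h : ∀ w, MeasurePreserving (φ w)) :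
    MeasurePreserving (fun z : α × (Fin n → α) => (Fin.cons (φ z.2 z.1) z.2 : Fin (n + 1) → α))
      (volume.prod volume) volume := by
  have skew : MeasurePreserving (fun z : (Fin n → α) × α => (z.1, φ z.1 z.2))
      (volume.prod volume) (volume.prod volume) :=
    (MeasurePreserving.id volume).skew_product hφ (.of_forall fun w => (h w).map_eq)
  have := (volume_preserving_piFinSuccAbove (fun _ : Fin (n + 1) => α) 0).symm.comp
    (Measure.measurePreserving_swap.comp (skew.comp Measure.measurePreserving_swap))
  convert this using 1
  · rfl
  funext z
  simp [MeasurableEquiv.piFinSuccAbove_symm_apply, Fin.insertNthEquiv, Fin.insertNth_zero']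

section HyperplanePoint

variable {m : ℕ}

noncomputable def hyperplanePoint (t : ℝ) (u : Fin m → ℝ) : Fin (m + 1) → ℝ :=
  Fin.cons (t - ∑ j, u j) u

theorem sum_hyperplanePoint (t : ℝ) (u : Fin m → ℝ) : ∑ j, hyperplanePoint t u j = t := by
  simp [hyperplanePoint, Fin.sum_cons]

theorem measurePreserving_hyperplanePoint :
    MeasurePreserving (fun z : ℝ × (Fin m → ℝ) => hyperplanePoint z.1 z.2)
      (volume.prod volume) volume :=
  measurePreserving_finCons_skew (fun w t => t - ∑ j, w j) (by fun_prop)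
    fun w => measurePreserving_sub_right volume _

theorem measurePreserving_hyperplanePoint_succAbove (t : ℝ) (i : Fin (m + 1)) :
    MeasurePreserving (fun u j => hyperplanePoint t u (i.succAbove j)) := by
  induction i using Fin.cases with
  | zero =>
    simp only [hyperplanePoint, Fin.zero_succAbove, Fin.cons_succ]
    exact MeasurePreserving.id volume
  | succ k =>
    cases m with
    | zero => exact k.elim0
    | succ n =>
      have := (measurePreserving_finCons_skew (fun w s => t - ∑ j, w j - s) (by fun_prop)
        fun w => Measure.measurePreserving_sub_left volume _).comp
          (volume_preserving_piFinSuccAbove (fun _ : Fin (n + 1) => ℝ) k)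
      convert this using 1
      · rfl
      funext u j
      induction j using Fin.cases with
      | zero =>
        simp only [hyperplanePoint, Fin.sum_univ_succAbove u k, ne_eq, Fin.succ_ne_zero,
          not_false_eq_true, Fin.succAbove_ne_zero_zero, Fin.cons_zero,
          MeasurableEquiv.piFinSuccAbove_apply, Function.comp_apply,
          Fin.insertNthEquiv_symm_apply, Fin.removeNth]
        ring
      | succ j => simp [hyperplanePoint, Fin.succ_succAbove_succ, Fin.removeNth]

theorem lintegral_enorm_prod_hyperplanePoint_le {𝕜 : Type*} [NormedCommRing 𝕜] [NormOneClass 𝕜]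
    (t : ℝ) {p : Fin (m + 1) → ℝ≥0∞} (hp : ∑ i, (p i)⁻¹ = 1) {F : Fin (m + 1) → (Fin m → ℝ) → 𝕜}
    (hF : ∀ i, AEStronglyMeasurable (F i)) :
    ∫⁻ u, ‖∏ i, F i (fun j => hyperplanePoint t u (i.succAbove j))‖ₑ
      ≤ ∏ i, eLpNorm (F i) (p i) volume := by
  have hS := measurePreserving_hyperplanePoint_succAbove (m := m) t
  calc _ = eLpNorm (fun u => ∏ i, F i (fun j => hyperplanePoint t u (i.succAbove j))) 1 volume :=
        eLpNorm_one_eq_lintegral_enorm.symm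
    _ ≤ ∏ i, eLpNorm (fun u => F i (fun j => hyperplanePoint t u (i.succAbove j))) (p i) volume := by
        have := eLpNorm_prod_le Finset.univ p fun i _ => (hF i).comp_measurePreserving (hS i)
        rwa [hp, inv_one] at this
    _ = ∏ i, eLpNorm (F i) (p i) volume :=
        Finset.prod_congr rfl fun i _ => eLpNorm_comp_measurePreserving (hF i) (hS i)

theorem lintegral_enorm_simplexIntegrand_le {𝕜 : Type*} [NormedField 𝕜] {ψ : ℝ → 𝕜}
    (hψ : AEStronglyMeasurable ψ) {p : Fin (m + 1) → ℝ≥0∞} (hp : ∑ i, (p i)⁻¹ = 1)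
    {F : Fin (m + 1) → (Fin m → ℝ) → 𝕜} (hF : ∀ i, AEStronglyMeasurable (F i)) :
    ∫⁻ x : Fin (m + 1) → ℝ, ‖(∏ i, F i (fun j => x (i.succAbove j))) * ψ (∑ j, x j)‖ₑ
      ≤ (∏ i, eLpNorm (F i) (p i) volume) * ∫⁻ t, ‖ψ t‖ₑ := by
  -- Only upper bounds on `∫⁻` are used, so the integrand need not be known to be measurable.
  set g := fun x : Fin (m + 1) → ℝ => ‖(∏ i, F i (fun j => x (i.succAbove j))) * ψ (∑ j, x j)‖ₑ
  calc ∫⁻ x, g x = ∫⁻ x, g x ∂(volume.prod volume).map fun z => hyperplanePoint z.1 z.2 := by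
        rw [measurePreserving_hyperplanePoint.map_eq]
    _ ≤ ∫⁻ z, g (hyperplanePoint z.1 z.2) ∂(volume.prod volume) := lintegral_map_le _ _
    _ ≤ ∫⁻ t, ∫⁻ u, g (hyperplanePoint t u) := lintegral_prod_le _
    _ = ∫⁻ t, (∫⁻ u, ‖∏ i, F i (fun j => hyperplanePoint t u (i.succAbove j))‖ₑ) * ‖ψ t‖ₑ := by
        refine lintegral_congr fun t => ?_
        simp only [g, sum_hyperplanePoint, enorm_mul]
        exact lintegral_mul_const' _ _ enorm_ne_top
    _ ≤ ∫⁻ t, (∏ i, eLpNorm (F i) (p i) volume) * ‖ψ t‖ₑ := by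
        gcongr with t
        exact lintegral_enorm_prod_hyperplanePoint_le t hp hF
    _ = (∏ i, eLpNorm (F i) (p i) volume) * ∫⁻ t, ‖ψ t‖ₑ := lintegral_const_mul'' _ hψ.enorm

theorem norm_simplexForm_le {ψ : ℝ → ℂ} (hψ : Integrable ψ) {p : Fin (m + 1) → ℝ≥0∞}
    (hp : ∑ i, (p i)⁻¹ = 1) {F : Fin (m + 1) → (Fin m → ℝ) → ℂ}
    (hF : ∀ i, MemLp (F i) (p i) volume) :
    ‖simplexForm m ψ F‖ ≤ (∫ t, ‖ψ t‖) * ∏ i, (eLpNorm (F i) (p i) volume).toReal := by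
  have hF_fin : ∏ i, eLpNorm (F i) (p i) volume ≠ ∞ :=
    ENNReal.prod_ne_top fun i _ => (hF i).eLpNorm_ne_top
  calc ‖simplexForm m ψ F‖
      ≤ (∫⁻ x : Fin (m + 1) → ℝ,
          .ofReal ‖(∏ i, F i (fun j => x (i.succAbove j))) * ψ (∑ j, x j)‖).toReal :=
        norm_integral_le_lintegral_norm _
    _ = (∫⁻ x : Fin (m + 1) → ℝ,
          ‖(∏ i, F i (fun j => x (i.succAbove j))) * ψ (∑ j, x j)‖ₑ).toReal := by
        simp only [ofReal_norm]
    _ ≤ ((∏ i, eLpNorm (F i) (p i) volume) * ∫⁻ t, ‖ψ t‖ₑ).toReal :=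
        ENNReal.toReal_mono (ENNReal.mul_ne_top hF_fin hψ.2.ne)
          (lintegral_enorm_simplexIntegrand_le hψ.1 hp fun i => (hF i).1)
    _ = (∫ t, ‖ψ t‖) * ∏ i, (eLpNorm (F i) (p i) volume).toReal := by
        rw [ENNReal.toReal_mul, ENNReal.toReal_prod, integral_norm_eq_lintegral_enorm hψ.1,
          mul_comm]

end HyperplanePoint

theorem stmt_13_general (m : ℕ) :
    ∃ C : ℝ, 0 < C ∧
      ∀ (ψ : ℝ → ℂ) (A : ℝ), Integrable ψ → (∫ t, ‖ψ t‖) ≤ A →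
      ∀ (p : Fin (m + 1) → ℝ≥0∞), (∀ i, 1 ≤ p i) → (∑ i, (p i)⁻¹ = 1) →
      ∀ F : Fin (m + 1) → (Fin m → ℝ) → ℂ, (∀ i, MemLp (F i) (p i) volume) →
        ‖simplexForm m ψ F‖ ≤ C * A * ∏ i, (eLpNorm (F i) (p i) volume).toReal := by
  refine ⟨1, one_pos, fun ψ A hψ hA p _ hp F hF => ?_⟩
  rw [one_mul]
  exact (norm_simplexForm_le hψ hp hF).trans
    (mul_le_mul_of_nonneg_right hA (Finset.prod_nonneg fun i _ => ENNReal.toReal_nonneg))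

/-- Trivial estimate: if `‖ψ‖₁ ≤ A` then for any Hölder tuple `∑ᵢ 1/pᵢ = 1` one has
`|Λ(F₀,…,F_m)| ≤ C_m A ∏ᵢ ‖Fᵢ‖_{pᵢ}` with `C_m` depending only on `m`. -/
theorem stmt_13 (m : ℕ) (hm : 1 ≤ m) :
    ∃ C : ℝ, 0 < C ∧
      ∀ (ψ : ℝ → ℂ) (A : ℝ), Integrable ψ → (∫ t, ‖ψ t‖) ≤ A →
      ∀ (p : Fin (m + 1) → ℝ≥0∞), (∀ i, 1 ≤ p i) → (∑ i, (p i)⁻¹ = 1) →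
      ∀ F : Fin (m + 1) → (Fin m → ℝ) → ℂ, (∀ i, MemLp (F i) (p i) volume) →
        ‖simplexForm m ψ F‖ ≤ C * A * ∏ i, (eLpNorm (F i) (p i) volume).toReal :=
  stmt_13_general m
end
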